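/- Assume that for every skew-symmetrizable initial matrix the sign-coherence property holds (every C-matrix of every pattern is column sign-coherent). Then the third duality holds: for every skew-symmetrizable B⁰ and every path w = (k₁,…,k_r) from t₀ to t, one has C_t[B⁰, w] = (G[B_tᵀ, w̄])ᵀ and G_t[B⁰, w] = (C[B_tᵀ, w̄])ᵀ, where B_t is the matrix at t, w̄ = (k_r,…,k₁) is the reversed path (from t back to t₀), and G[B_tᵀ, w̄], C[B_tᵀ, w̄] are the G- and C-matrices computed with initial matrix B_tᵀ along w̄. In particular, every G-matrix G_t[B⁰, w] is row sign-coherent. -/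

import Mathlib

/-!
Under sign-coherence a mutation in direction `k` multiplies `C_t` on the right by
`P = J_k + [ε B_t]₊^{k•}` and `G_t` by `Q = J_k + [-ε B_t]₊^{•k}`, where `ε` is the sign of
the `k`-th column of `C_t`. These are involutions with `B_t P = Q B_{t'}` and `D Q = Pᵀ D`,
which give the second duality `B⁰ C_t = G_t B_t` and the first duality `C_tᵀ D G_t = D`.

The `C`-half of the third duality is proved by induction on the length of the path, together
with the base-change formula `C_t[B⁰, k :: w] = P_{-ε}(μ_k B⁰) C_t[μ_k B⁰, w]`, where `ε` is
the sign of the `k`-th row of `G_t[μ_k B⁰, w]` (row sign-coherent by the third duality for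
shorter paths). Transposition exchanges `P_{-ε}(B)` and `Q_ε(Bᵀ)`, so the base-change formula
for `w` is the `G`-mutation along the reversed path `w̄ ++ [k]`. The base-change formula passes
from `v` to `v ++ [m]` because the signs involved agree, except when the `m`-th column of `C_t`
is `±e_k`; then the first duality makes the `k`-th row of `G_t` equal to `±e_mᵀ`, and both
sign conventions give the same product. The `G`-half of the third duality is the `C`-half for
`(B_tᵀ, w̄)`.
-/

open Matrix

namespace ClusterPattern

variable {ι : Type*} [Fintype ι] [DecidableEq ι]

/-- Entrywise positive part `[A]₊`. -/
def posPart (A : Matrix ι ι ℤ) : Matrix ι ι ℤ := Matrix.of fun i j => max (A i j) 0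

/-- `A^{•k}`: all columns other than the `k`-th set to `0`. -/
def colSel (k : ι) (A : Matrix ι ι ℤ) : Matrix ι ι ℤ :=
  Matrix.of fun i j => if j = k then A i j else 0

/-- `A^{k•}`: all rows other than the `k`-th set to `0`. -/
def rowSel (k : ι) (A : Matrix ι ι ℤ) : Matrix ι ι ℤ :=
  Matrix.of fun i j => if i = k then A i j else 0

/-- `J_k`: identity with `k`-th diagonal entry replaced by `-1`. -/
def Jmat (k : ι) : Matrix ι ι ℤ := Matrix.diagonal fun i => if i = k then -1 else 1

/-- A skew-symmetrizable integer matrix. -/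
def IsSkewSymmetrizable (B : Matrix ι ι ℤ) : Prop :=
  ∃ D : ι → ℚ, (∀ i, 0 < D i) ∧ ∀ i j, D i * (B i j : ℚ) = -(D j * (B j i : ℚ))

/-- Matrix mutation `μ_k`. -/
def mutate (k : ι) (B : Matrix ι ι ℤ) : Matrix ι ι ℤ :=
  Matrix.of fun i j => if i = k ∨ j = k then -B i j
    else B i j + B i k * max (B k j) 0 + max (-B i k) 0 * B k j

/-- The exchange matrix `B_t` at the vertex reached from `B0` along the path `w`. -/
def Bmat (B0 : Matrix ι ι ℤ) (w : List ι) : Matrix ι ι ℤ :=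
  w.foldl (fun B k => mutate k B) B0

/-- One mutation step of a `C`-matrix. -/
def Cstep (B C : Matrix ι ι ℤ) (k : ι) : Matrix ι ι ℤ :=
  C * Jmat k + C * rowSel k (posPart B) + colSel k (posPart (-C)) * B

/-- One mutation step of a `G`-matrix. -/
def Gstep (B0 B C G : Matrix ι ι ℤ) (k : ι) : Matrix ι ι ℤ :=
  G * Jmat k + G * colSel k (posPart (-B)) - B0 * colSel k (posPart (-C))

/-- The `C`-matrix `C_t` at the vertex reached from the initial matrix `B0` along `w`. -/
def Cmat (B0 : Matrix ι ι ℤ) (w : List ι) : Matrix ι ι ℤ :=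
  (w.foldl (fun p k => (mutate k p.1, Cstep p.1 p.2 k))
    ((B0, 1) : Matrix ι ι ℤ × Matrix ι ι ℤ)).2

/-- The `G`-matrix `G_t` at the vertex reached from the initial matrix `B0` along `w`. -/
def Gmat (B0 : Matrix ι ι ℤ) (w : List ι) : Matrix ι ι ℤ :=
  (w.foldl (fun p k => (mutate k p.1, Cstep p.1 p.2.1 k, Gstep B0 p.1 p.2.1 p.2.2 k))
    ((B0, 1, 1) : Matrix ι ι ℤ × Matrix ι ι ℤ × Matrix ι ι ℤ)).2.2

/-- A nonzero integer vector with all entries nonnegative. -/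
def IsPositiveVec (v : ι → ℤ) : Prop := v ≠ 0 ∧ ∀ i, 0 ≤ v i

/-- A nonzero integer vector with all entries nonpositive. -/
def IsNegativeVec (v : ι → ℤ) : Prop := v ≠ 0 ∧ ∀ i, v i ≤ 0

/-- Every column is a positive or a negative vector. -/
def ColSignCoherent (M : Matrix ι ι ℤ) : Prop :=
  ∀ j, IsPositiveVec (fun i => M i j) ∨ IsNegativeVec (fun i => M i j)

/-- Every row is a positive or a negative vector. -/
def RowSignCoherent (M : Matrix ι ι ℤ) : Prop :=
  ∀ i, IsPositiveVec (fun j => M i j) ∨ IsNegativeVec (fun j => M i j)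

set_option linter.unusedSectionVars false

lemma max_sub_max_neg (x : ℤ) : max x 0 - max (-x) 0 = x := by
  rcases le_total x 0 with h | h <;> simp [h]

lemma mul_apply_of_row_single {R : Type*} [NonUnitalNonAssocSemiring R] {A M : Matrix ι ι R}
    {k m : ι} (h : ∀ l ≠ m, A k l = 0) (j : ι) :
    (A * M) k j = A k m * M m j := by
  rw [mul_apply, Finset.sum_eq_single m (fun l _ hl => by rw [h l hl, zero_mul]) (by simp)]

lemma mul_apply_of_col_single {R : Type*} [NonUnitalNonAssocSemiring R] {A M : Matrix ι ι R}
    {k m : ι} (h : ∀ l ≠ k, M l m = 0) (i : ι) :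
    (A * M) i m = A i k * M k m := by
  rw [mul_apply, Finset.sum_eq_single k (fun l _ hl => by rw [h l hl, mul_zero]) (by simp)]

lemma row_support_of_mul_eq_one {R : Type*} [CommRing R] {X Y : Matrix ι ι R} (h : X * Y = 1)
    {m k : ι} (hX : ∀ i ≠ k, X m i = 0) : X m k * Y k m = 1 ∧ ∀ j ≠ m, Y k j = 0 := by
  have hrow : ∀ j, X m k * Y k j = (1 : Matrix ι ι R) m j := fun j => by
    rw [← mul_apply_of_row_single hX, h]
  refine ⟨by simpa using hrow m, fun j hj => ?_⟩
  have h1 := hrow m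
  have h2 := hrow j
  rw [one_apply_eq] at h1
  rw [one_apply_ne (Ne.symm hj)] at h2
  linear_combination (-Y k j) * h1 + Y k m * h2

lemma isUnit_apply_of_row_single {R : Type*} [CommRing R] {A : Matrix ι ι R} (hA : IsUnit A)
    {k m : ι} (h : ∀ j ≠ m, A k j = 0) : IsUnit (A k m) := by
  obtain ⟨A', hA'⟩ := hA.exists_right_inv
  exact IsUnit.of_mul_eq_one _ (row_support_of_mul_eq_one hA' h).1

lemma isUnit_apply_of_col_single {R : Type*} [CommRing R] {A : Matrix ι ι R} (hA : IsUnit A)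
    {k m : ι} (h : ∀ i ≠ k, A i m = 0) : IsUnit (A k m) :=
  isUnit_apply_of_row_single (A := Aᵀ) (by simpa using hA) h

@[simp] lemma posPart_apply (A : Matrix ι ι ℤ) (i j : ι) : posPart A i j = max (A i j) 0 := rfl

@[simp] lemma rowSel_apply (k : ι) (A : Matrix ι ι ℤ) (i j : ι) :
    rowSel k A i j = if i = k then A i j else 0 := rfl

@[simp] lemma colSel_apply (k : ι) (A : Matrix ι ι ℤ) (i j : ι) :
    colSel k A i j = if j = k then A i j else 0 := rfl

lemma mutate_apply (k : ι) (B : Matrix ι ι ℤ) (i j : ι) :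
    mutate k B i j = if i = k ∨ j = k then -B i j
      else B i j + B i k * max (B k j) 0 + max (-B i k) 0 * B k j := rfl

lemma mul_Jmat_apply (A : Matrix ι ι ℤ) (k i j : ι) :
    (A * Jmat k) i j = if j = k then -A i j else A i j := by
  rw [Jmat, mul_diagonal]
  split_ifs <;> ring

lemma Jmat_mul_apply (A : Matrix ι ι ℤ) (k i j : ι) :
    (Jmat k * A) i j = if i = k then -A i j else A i j := by
  rw [Jmat, diagonal_mul]
  split_ifs <;> ring

lemma mul_rowSel_apply (A M : Matrix ι ι ℤ) (k i j : ι) :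
    (A * rowSel k M) i j = A i k * M k j := by
  simp [mul_apply]

lemma colSel_mul_apply (M A : Matrix ι ι ℤ) (k i j : ι) :
    (colSel k M * A) i j = M i k * A k j := by
  simp [mul_apply]

lemma mul_colSel (A M : Matrix ι ι ℤ) (k : ι) : A * colSel k M = colSel k (A * M) := by
  ext i j
  by_cases h : j = k <;> simp [mul_apply, h]

lemma rowSel_mul (M A : Matrix ι ι ℤ) (k : ι) : rowSel k M * A = rowSel k (M * A) := by
  ext i j
  by_cases h : i = k <;> simp [mul_apply, h]

def Pmat (ε : ℤ) (B : Matrix ι ι ℤ) (k : ι) : Matrix ι ι ℤ :=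
  Jmat k + rowSel k (posPart (ε • B))

def Qmat (ε : ℤ) (B : Matrix ι ι ℤ) (k : ι) : Matrix ι ι ℤ :=
  Jmat k + colSel k (posPart (-ε • B))

lemma Pmat_apply (ε : ℤ) (B : Matrix ι ι ℤ) (k i j : ι) :
    Pmat ε B k i j = (if i = j then (if i = k then -1 else 1) else 0) +
      if i = k then max (ε * B i j) 0 else 0 := by
  simp [Pmat, Jmat, diagonal_apply, -zsmul_eq_mul]

lemma Qmat_apply (ε : ℤ) (B : Matrix ι ι ℤ) (k i j : ι) :
    Qmat ε B k i j = (if i = j then (if i = k then -1 else 1) else 0) +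
      if j = k then max (-(ε * B i j)) 0 else 0 := by
  simp [Qmat, Jmat, diagonal_apply, -zsmul_eq_mul]

lemma mul_Pmat_apply (A B : Matrix ι ι ℤ) (ε : ℤ) (k i j : ι) :
    (A * Pmat ε B k) i j = (if j = k then -A i j else A i j) + A i k * max (ε * B k j) 0 := by
  simp [Pmat, mul_add, mul_Jmat_apply, mul_rowSel_apply, -zsmul_eq_mul]

lemma Qmat_mul_apply (A B : Matrix ι ι ℤ) (ε : ℤ) (k i j : ι) :
    (Qmat ε B k * A) i j = (if i = k then -A i j else A i j) + max (-(ε * B i k)) 0 * A k j := by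
  simp [Qmat, add_mul, Jmat_mul_apply, colSel_mul_apply, -zsmul_eq_mul]

lemma Pmat_mul_apply_of_ne (A B : Matrix ι ι ℤ) (ε : ℤ) {k i : ι} (hi : i ≠ k) (j : ι) :
    (Pmat ε B k * A) i j = A i j := by
  simp [Pmat, add_mul, Jmat_mul_apply, rowSel_mul, hi]

lemma mul_Qmat_apply_of_ne (A B : Matrix ι ι ℤ) (ε : ℤ) {k j : ι} (hj : j ≠ k) (i : ι) :
    (A * Qmat ε B k) i j = A i j := by
  simp [Qmat, mul_add, mul_Jmat_apply, mul_colSel, hj]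

lemma Pmat_apply_col_self {B : Matrix ι ι ℤ} {k : ι} (hkk : B k k = 0) (ε : ℤ) (i : ι) :
    Pmat ε B k i k = if i = k then -1 else 0 := by
  by_cases hi : i = k <;> simp [Pmat_apply, hi, hkk]

lemma Qmat_apply_self {B : Matrix ι ι ℤ} {k : ι} (hkk : B k k = 0) (ε : ℤ) :
    Qmat ε B k k k = -1 := by
  simp [Qmat_apply, hkk]

lemma Pmat_transpose (ε : ℤ) (B : Matrix ι ι ℤ) (k : ι) :
    (Pmat ε B k)ᵀ = Qmat (-ε) Bᵀ k := by
  ext i j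
  by_cases h : i = j
  · subst h; simp [Pmat_apply, Qmat_apply]
  · simp [Pmat_apply, Qmat_apply, h, Ne.symm h]

lemma Qmat_transpose (ε : ℤ) (B : Matrix ι ι ℤ) (k : ι) :
    (Qmat ε B k)ᵀ = Pmat (-ε) Bᵀ k := by
  have h := Pmat_transpose (-ε) Bᵀ k
  rw [neg_neg, transpose_transpose] at h
  rw [← h, transpose_transpose]

lemma Pmat_eq_Pmat_neg_add (ε : ℤ) (B : Matrix ι ι ℤ) (k : ι) :
    Pmat ε B k = Pmat (-ε) B k + ε • rowSel k B := by
  ext i j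
  by_cases hi : i = k
  · simp only [hi, Pmat_apply, ↓reduceIte, Matrix.add_apply, neg_mul, Matrix.smul_apply,
      rowSel_apply, Int.zsmul_eq_mul]
    linear_combination max_sub_max_neg (ε * B k j)
  · simp [Pmat_apply, hi, -zsmul_eq_mul]

lemma Pmat_mul_self {B : Matrix ι ι ℤ} {k : ι} (hkk : B k k = 0) (ε : ℤ) :
    Pmat ε B k * Pmat ε B k = 1 := by
  ext i j
  rw [mul_Pmat_apply]
  by_cases hi : i = k <;> by_cases hj : j = k <;> by_cases hij : i = j <;>
    simp_all [Pmat_apply, one_apply]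

lemma Qmat_mul_self {B : Matrix ι ι ℤ} {k : ι} (hkk : B k k = 0) (ε : ℤ) :
    Qmat ε B k * Qmat ε B k = 1 := by
  have h := congrArg transpose (Pmat_mul_self (B := Bᵀ) (k := k) hkk (-ε))
  rwa [transpose_mul, transpose_one, Pmat_transpose, transpose_transpose, neg_neg] at h

lemma mutate_transpose (k : ι) (B : Matrix ι ι ℤ) : mutate k Bᵀ = (mutate k B)ᵀ := by
  ext i j
  simp only [transpose_apply, mutate_apply, or_comm (a := i = k)]
  split_ifs
  · rfl
  · linear_combination (-B j k) * max_sub_max_neg (B k i) + B k i * max_sub_max_neg (B j k)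

lemma mutate_mutate (k : ι) (B : Matrix ι ι ℤ) : mutate k (mutate k B) = B := by
  ext i j
  by_cases hik : i = k
  · simp [mutate_apply, hik]
  by_cases hjk : j = k
  · simp [mutate_apply, hjk]
  simp only [mutate_apply, hik, hjk, or_self, or_true, true_or, if_true, if_false, neg_neg]
  linear_combination B i k * max_sub_max_neg (B k j) + (-B k j) * max_sub_max_neg (B i k)

lemma mutate_row_self (k : ι) (B : Matrix ι ι ℤ) (j : ι) : mutate k B k j = -B k j := by
  simp [mutate_apply]

lemma Pmat_neg_mutate (ε : ℤ) (B : Matrix ι ι ℤ) (k : ι) :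
    Pmat (-ε) (mutate k B) k = Pmat ε B k := by
  ext i j
  by_cases hi : i = k
  · subst hi; simp [Pmat_apply, mutate_row_self]
  · simp [Pmat_apply, hi]

lemma mul_Pmat_eq_Qmat_mul_mutate {B : Matrix ι ι ℤ} {k : ι} (hkk : B k k = 0) {ε : ℤ}
    (hε : ε = 1 ∨ ε = -1) :
    B * Pmat ε B k = Qmat ε B k * mutate k B := by
  ext i j
  rw [mul_Pmat_apply, Qmat_mul_apply]
  rcases hε with rfl | rfl <;> by_cases hi : i = k <;> by_cases hj : j = k <;>
    simp [mutate_apply, hi, hj, hkk]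
  all_goals
    linear_combination (-B i k) * max_sub_max_neg (B k j) + B k j * max_sub_max_neg (B i k)

def IsSkewSymmetrizer (D : ι → ℚ) (B : Matrix ι ι ℤ) : Prop :=
  (∀ i, 0 < D i) ∧ ∀ i j, D i * (B i j : ℚ) = -(D j * (B j i : ℚ))

namespace IsSkewSymmetrizer

variable {D : ι → ℚ} {B : Matrix ι ι ℤ}

lemma isSkewSymmetrizable (h : IsSkewSymmetrizer D B) : IsSkewSymmetrizable B := ⟨D, h⟩

lemma apply_self (h : IsSkewSymmetrizer D B) (k : ι) : B k k = 0 := by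
  have hk := h.2 k k
  have : (B k k : ℚ) = 0 := by nlinarith [h.1 k]
  exact_mod_cast this

lemma transpose (h : IsSkewSymmetrizer D B) : IsSkewSymmetrizer D⁻¹ Bᵀ := by
  refine ⟨fun i => inv_pos.mpr (h.1 i), fun i j => ?_⟩
  have := h.2 j i
  have := (h.1 i).ne'
  have := (h.1 j).ne'
  simp only [Pi.inv_apply, transpose_apply]
  field_simp
  linarith

lemma mutate (h : IsSkewSymmetrizer D B) (k : ι) : IsSkewSymmetrizer D (mutate k B) := by
  refine ⟨h.1, fun i j => ?_⟩
  simp only [mutate_apply, or_comm (a := j = k)]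
  split_ifs with hc
  · push_cast; linarith [h.2 i j]
  · have hDi : D i * max (-(B i k) : ℚ) 0 = D k * max ((B k i) : ℚ) 0 := by
      rw [mul_max_of_nonneg _ _ (h.1 i).le, mul_max_of_nonneg _ _ (h.1 k).le]
      congr 1 <;> linarith [h.2 i k]
    have hDj : D j * max (-(B j k) : ℚ) 0 = D k * max ((B k j) : ℚ) 0 := by
      rw [mul_max_of_nonneg _ _ (h.1 j).le, mul_max_of_nonneg _ _ (h.1 k).le]
      congr 1 <;> linarith [h.2 j k]
    push_cast
    linear_combination h.2 i j + max (B k j : ℚ) 0 * h.2 i k + (B k j : ℚ) * hDi +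
      max (B k i : ℚ) 0 * h.2 j k + (B k i : ℚ) * hDj

end IsSkewSymmetrizer

lemma IsSkewSymmetrizable.mutate {B : Matrix ι ι ℤ} (h : IsSkewSymmetrizable B) (k : ι) :
    IsSkewSymmetrizable (mutate k B) :=
  let ⟨_, hD⟩ := h; (IsSkewSymmetrizer.mutate hD k).isSkewSymmetrizable

lemma Bmat_cons (B0 : Matrix ι ι ℤ) (k : ι) (w : List ι) :
    Bmat B0 (k :: w) = Bmat (mutate k B0) w := rfl

lemma Bmat_append (B0 : Matrix ι ι ℤ) (u v : List ι) : Bmat B0 (u ++ v) = Bmat (Bmat B0 u) v :=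
  List.foldl_append ..

lemma Bmat_concat (B0 : Matrix ι ι ℤ) (w : List ι) (k : ι) :
    Bmat B0 (w ++ [k]) = mutate k (Bmat B0 w) := by
  rw [Bmat_append]; rfl

lemma Bmat_transpose (B0 : Matrix ι ι ℤ) (w : List ι) : Bmat B0ᵀ w = (Bmat B0 w)ᵀ := by
  induction w generalizing B0 with
  | nil => rfl
  | cons k w ih => rw [Bmat_cons, Bmat_cons, mutate_transpose, ih]

lemma Bmat_Bmat_reverse (B0 : Matrix ι ι ℤ) (w : List ι) :
    Bmat (Bmat B0 w) w.reverse = B0 := by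
  induction w generalizing B0 with
  | nil => rfl
  | cons k w ih => rw [Bmat_cons, List.reverse_cons, Bmat_concat, ih, mutate_mutate]

lemma IsSkewSymmetrizer.Bmat {D : ι → ℚ} {B0 : Matrix ι ι ℤ} (h : IsSkewSymmetrizer D B0)
    (w : List ι) : IsSkewSymmetrizer D (Bmat B0 w) := by
  induction w generalizing B0 with
  | nil => exact h
  | cons k w ih => exact ih (h.mutate k)

lemma IsSkewSymmetrizable.Bmat_apply_self {B0 : Matrix ι ι ℤ} (h : IsSkewSymmetrizable B0)
    (w : List ι) (k : ι) : Bmat B0 w k k = 0 :=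
  let ⟨_, hD⟩ := h; (IsSkewSymmetrizer.Bmat hD w).apply_self k

lemma IsSkewSymmetrizable.Bmat_transpose {B0 : Matrix ι ι ℤ} (h : IsSkewSymmetrizable B0)
    (w : List ι) : IsSkewSymmetrizable (Bmat B0 w)ᵀ :=
  let ⟨_, hD⟩ := h; (IsSkewSymmetrizer.Bmat hD w).transpose.isSkewSymmetrizable

lemma Cmat_nil (B0 : Matrix ι ι ℤ) : Cmat B0 [] = 1 := rfl

lemma Gmat_nil (B0 : Matrix ι ι ℤ) : Gmat B0 [] = 1 := rfl

lemma foldl_Cstep_fst (w : List ι) (B C : Matrix ι ι ℤ) :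
    (w.foldl (fun p k => (mutate k p.1, Cstep p.1 p.2 k)) (B, C)).1 = Bmat B w := by
  induction w generalizing B C with
  | nil => rfl
  | cons k w ih => exact ih _ _

lemma foldl_Gstep_fst (B0 : Matrix ι ι ℤ) (w : List ι) (B C G : Matrix ι ι ℤ) :
    (w.foldl (fun p k => (mutate k p.1, Cstep p.1 p.2.1 k, Gstep B0 p.1 p.2.1 p.2.2 k))
      (B, C, G)).1 = Bmat B w := by
  induction w generalizing B C G with
  | nil => rfl
  | cons k w ih => exact ih _ _ _

lemma foldl_Gstep_snd (B0 : Matrix ι ι ℤ) (w : List ι) (B C G : Matrix ι ι ℤ) :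
    (w.foldl (fun p k => (mutate k p.1, Cstep p.1 p.2.1 k, Gstep B0 p.1 p.2.1 p.2.2 k))
      (B, C, G)).2.1 = (w.foldl (fun p k => (mutate k p.1, Cstep p.1 p.2 k)) (B, C)).2 := by
  induction w generalizing B C G with
  | nil => rfl
  | cons k w ih => exact ih _ _ _

lemma Cmat_concat (B0 : Matrix ι ι ℤ) (w : List ι) (k : ι) :
    Cmat B0 (w ++ [k]) = Cstep (Bmat B0 w) (Cmat B0 w) k := by
  rw [Cmat, List.foldl_append, List.foldl_cons, List.foldl_nil, foldl_Cstep_fst]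
  rfl

lemma Gmat_concat (B0 : Matrix ι ι ℤ) (w : List ι) (k : ι) :
    Gmat B0 (w ++ [k]) = Gstep B0 (Bmat B0 w) (Cmat B0 w) (Gmat B0 w) k := by
  rw [Gmat, List.foldl_append, List.foldl_cons, List.foldl_nil, foldl_Gstep_fst,
    foldl_Gstep_snd]
  rfl

-- For `v = 0` both signs qualify.
def IsSignOf (ε : ℤ) (v : ι → ℤ) : Prop := (ε = 1 ∨ ε = -1) ∧ ∀ i, 0 ≤ ε * v i

lemma exists_isSignOf {v : ι → ℤ} (h : IsPositiveVec v ∨ IsNegativeVec v) :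
    ∃ ε, IsSignOf ε v := by
  rcases h with ⟨-, hv⟩ | ⟨-, hv⟩
  · exact ⟨1, Or.inl rfl, fun i => by simpa using hv i⟩
  · exact ⟨-1, Or.inr rfl, fun i => by simpa using hv i⟩

lemma IsSignOf.eq {ε ε' : ℤ} {v v' : ι → ℤ} (h : IsSignOf ε v) (h' : IsSignOf ε' v')
    {i : ι} (hvi : v i = v' i) (hi : v i ≠ 0) : ε = ε' := by
  have := h.2 i; have := h'.2 i
  rcases h.1 with rfl | rfl <;> rcases h'.1 with rfl | rfl <;> omega

lemma IsSignOf.apply_eq_of_isUnit {ε : ℤ} {v : ι → ℤ} (h : IsSignOf ε v) {i : ι}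
    (hi : IsUnit (v i)) : v i = ε := by
  have := h.2 i
  rcases h.1 with rfl | rfl <;> rcases Int.isUnit_iff.mp hi with h | h <;> omega

lemma IsSignOf.eq_of_apply_eq {ε ε' : ℤ} {v : ι → ℤ} (h : IsSignOf ε v)
    (hε' : ε' = 1 ∨ ε' = -1) {i : ι} (hi : v i = ε') : ε = ε' := by
  have := h.2 i
  rw [hi] at this
  rcases h.1 with rfl | rfl <;> rcases hε' with rfl | rfl <;> omega

lemma Cstep_eq {B C : Matrix ι ι ℤ} {k : ι} {ε : ℤ} (h : IsSignOf ε fun i => C i k) :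
    Cstep B C k = C * Pmat ε B k := by
  ext i j
  have hi := h.2 i
  rw [Cstep, Matrix.add_apply, Matrix.add_apply, mul_Jmat_apply, mul_rowSel_apply, colSel_mul_apply,
    mul_Pmat_apply]
  rcases h.1 with rfl | rfl
  · simp_all
  · simp only [neg_mul, one_mul, Left.nonneg_neg_iff] at hi
    simp only [posPart_apply, Matrix.neg_apply, Int.neg_nonneg, hi, sup_of_le_left, neg_mul,
      one_mul]
    linear_combination C i k * max_sub_max_neg (B k j)

lemma Gstep_eq {B0 B C G : Matrix ι ι ℤ} {k : ι} {ε : ℤ} (h : IsSignOf ε fun i => C i k)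
    (hBC : B0 * C = G * B) : Gstep B0 B C G k = G * Qmat ε B k := by
  rcases h with ⟨rfl | rfl, hC⟩
  · have h0 : colSel k (posPart (-C)) = 0 := by
      ext i j
      by_cases hj : j = k
      · subst hj; simpa using hC i
      · simp [hj]
    rw [Gstep, h0, Matrix.mul_zero, sub_zero, Qmat, Matrix.mul_add]
    simp
  · have hcol : colSel k (posPart (-C)) = -colSel k C := by
      ext i j
      by_cases hj : j = k
      · subst hj; simpa using hC i
      · simp [hj]
    have hpos : colSel k (posPart (-B)) + colSel k B = colSel k (posPart B) := by
      ext i j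
      by_cases hj : j = k
      · simp only [hj, Matrix.add_apply, colSel_apply, ↓reduceIte, posPart_apply,
          Matrix.neg_apply]
        linear_combination -max_sub_max_neg (B i k)
      · simp [hj]
    rw [Gstep, hcol, Matrix.mul_neg, mul_colSel B0 C, hBC, ← mul_colSel, sub_neg_eq_add,
      add_assoc, ← Matrix.mul_add, hpos, Qmat, Matrix.mul_add]
    simp

lemma Cmat_concat_of_isSignOf {B0 : Matrix ι ι ℤ} {w : List ι} {k : ι} {ε : ℤ}
    (h : IsSignOf ε fun i => Cmat B0 w i k) :
    Cmat B0 (w ++ [k]) = Cmat B0 w * Pmat ε (Bmat B0 w) k := by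
  rw [Cmat_concat, Cstep_eq h]

def SignCoherence (κ : Type*) [Fintype κ] [DecidableEq κ] : Prop :=
  ∀ B : Matrix κ κ ℤ, IsSkewSymmetrizable B → ∀ w, ColSignCoherent (Cmat B w)

lemma mul_Cmat_eq_Gmat_mul_Bmat {B0 : Matrix ι ι ℤ} (hsc : SignCoherence ι)
    (hB0 : IsSkewSymmetrizable B0) (w : List ι) : B0 * Cmat B0 w = Gmat B0 w * Bmat B0 w := by
  induction w using List.reverseRecOn with
  | nil => simp [Cmat_nil, Gmat_nil, Bmat]
  | append_singleton w k ih =>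
    obtain ⟨ε, hε⟩ := exists_isSignOf (hsc B0 hB0 w k)
    rw [Cmat_concat_of_isSignOf hε, Gmat_concat, Gstep_eq hε ih, Bmat_concat,
      ← Matrix.mul_assoc, ih, Matrix.mul_assoc,
      mul_Pmat_eq_Qmat_mul_mutate (hB0.Bmat_apply_self w k) hε.1, Matrix.mul_assoc]

lemma Gmat_concat_of_isSignOf {B0 : Matrix ι ι ℤ} (hsc : SignCoherence ι)
    (hB0 : IsSkewSymmetrizable B0) {w : List ι} {k : ι} {ε : ℤ}
    (h : IsSignOf ε fun i => Cmat B0 w i k) :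
    Gmat B0 (w ++ [k]) = Gmat B0 w * Qmat ε (Bmat B0 w) k := by
  rw [Gmat_concat, Gstep_eq h (mul_Cmat_eq_Gmat_mul_Bmat hsc hB0 w)]

lemma isUnit_Cmat {B0 : Matrix ι ι ℤ} (hsc : SignCoherence ι) (hB0 : IsSkewSymmetrizable B0)
    (w : List ι) : IsUnit (Cmat B0 w) := by
  induction w using List.reverseRecOn with
  | nil => exact isUnit_one
  | append_singleton w k ih =>
    obtain ⟨ε, hε⟩ := exists_isSignOf (hsc B0 hB0 w k)
    rw [Cmat_concat_of_isSignOf hε]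
    exact ih.mul (IsUnit.of_mul_eq_one _ (Pmat_mul_self (hB0.Bmat_apply_self w k) ε))

lemma isUnit_Gmat {B0 : Matrix ι ι ℤ} (hsc : SignCoherence ι) (hB0 : IsSkewSymmetrizable B0)
    (w : List ι) : IsUnit (Gmat B0 w) := by
  induction w using List.reverseRecOn with
  | nil => exact isUnit_one
  | append_singleton w k ih =>
    obtain ⟨ε, hε⟩ := exists_isSignOf (hsc B0 hB0 w k)
    rw [Gmat_concat_of_isSignOf hsc hB0 hε]
    exact ih.mul (IsUnit.of_mul_eq_one _ (Qmat_mul_self (hB0.Bmat_apply_self w k) ε))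

def toRat : Matrix ι ι ℤ →+* Matrix ι ι ℚ := (Int.castRingHom ℚ).mapMatrix

@[simp] lemma toRat_apply (M : Matrix ι ι ℤ) (i j : ι) : toRat M i j = M i j := rfl

lemma diagonal_mul_toRat_Qmat {D : ι → ℚ} {B : Matrix ι ι ℤ} (hD : IsSkewSymmetrizer D B)
    (ε : ℤ) (k : ι) :
    diagonal D * toRat (Qmat ε B k) = (toRat (Pmat ε B k))ᵀ * diagonal D := by
  ext i j
  rw [diagonal_mul, mul_diagonal, transpose_apply, toRat_apply, toRat_apply, Qmat_apply,
    Pmat_apply]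
  by_cases hij : i = j
  · subst hij; by_cases hi : i = k <;> simp [hi, hD.apply_self]
  · have hD' : D i * (-(ε * B i j)) = D j * (ε * B j i) := by linear_combination (-ε) * hD.2 i j
    by_cases hj : j = k
    · subst hj
      simp only [hij, Ne.symm hij, ↓reduceIte, zero_add, Int.cast_max, Int.cast_neg, Int.cast_mul,
        Int.cast_zero]
      rw [mul_max_of_nonneg _ _ (hD.1 i).le, mul_comm _ (D j),
        mul_max_of_nonneg _ _ (hD.1 j).le, hD', mul_zero, mul_zero]
    · simp [hij, Ne.symm hij, hj]

lemma Cmat_transpose_mul_Gmat {D : ι → ℚ} {B0 : Matrix ι ι ℤ} (hsc : SignCoherence ι)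
    (hD : IsSkewSymmetrizer D B0) (w : List ι) :
    (toRat (Cmat B0 w))ᵀ * diagonal D * toRat (Gmat B0 w) = diagonal D := by
  induction w using List.reverseRecOn with
  | nil => simp [Cmat_nil, Gmat_nil]
  | append_singleton w k ih =>
    obtain ⟨ε, hε⟩ := exists_isSignOf (hsc B0 hD.isSkewSymmetrizable w k)
    rw [Cmat_concat_of_isSignOf hε, Gmat_concat_of_isSignOf hsc hD.isSkewSymmetrizable hε,
      map_mul, map_mul, transpose_mul]
    set P := toRat (Pmat ε (Bmat B0 w) k)
    set Q := toRat (Qmat ε (Bmat B0 w) k)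
    calc Pᵀ * (toRat (Cmat B0 w))ᵀ * diagonal D * (toRat (Gmat B0 w) * Q)
        = Pᵀ * ((toRat (Cmat B0 w))ᵀ * diagonal D * toRat (Gmat B0 w)) * Q := by
          simp only [Matrix.mul_assoc]
      _ = (P * P)ᵀ * diagonal D := by
        rw [ih, Matrix.mul_assoc, diagonal_mul_toRat_Qmat (hD.Bmat w), transpose_mul,
          Matrix.mul_assoc]
      _ = diagonal D := by
        rw [← map_mul, Pmat_mul_self ((hD.Bmat w).apply_self k), map_one, transpose_one,
          Matrix.one_mul]

lemma Cmat_transpose_mul_diagonal_mul_Gmat_mul_diagonal_inv {D : ι → ℚ} {B0 : Matrix ι ι ℤ}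
    (hsc : SignCoherence ι) (hD : IsSkewSymmetrizer D B0) (w : List ι) :
    (toRat (Cmat B0 w))ᵀ * diagonal D * (toRat (Gmat B0 w) * diagonal D⁻¹) = 1 := by
  rw [← Matrix.mul_assoc, Cmat_transpose_mul_Gmat hsc hD, diagonal_mul_diagonal, ← diagonal_one]
  exact congrArg diagonal (funext fun i => mul_inv_cancel₀ (hD.1 i).ne')

lemma Cmat_col_single_iff {B0 : Matrix ι ι ℤ} (hsc : SignCoherence ι)
    (hB0 : IsSkewSymmetrizable B0) (w : List ι) (k m : ι) :
    (∀ i ≠ k, Cmat B0 w i m = 0) ↔ ∀ j ≠ m, Gmat B0 w k j = 0 := by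
  obtain ⟨D, hD⟩ : ∃ D, IsSkewSymmetrizer D B0 := hB0
  have hXY := Cmat_transpose_mul_diagonal_mul_Gmat_mul_diagonal_inv hsc hD w
  constructor
  · intro hC j hj
    have := (row_support_of_mul_eq_one hXY (m := m) (k := k) (by simp_all)).2 j hj
    simpa [(hD.1 j).ne'] using this
  · intro hG i hi
    have := (row_support_of_mul_eq_one (mul_eq_one_comm.mp hXY) (m := k) (k := m)
      (by simp_all)).2 i hi
    simpa [(hD.1 i).ne'] using this

lemma Cmat_mul_Gmat_pos_of_col_single {B0 : Matrix ι ι ℤ} (hsc : SignCoherence ι)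
    (hB0 : IsSkewSymmetrizable B0) {w : List ι} {k m : ι} (hC : ∀ i ≠ k, Cmat B0 w i m = 0) :
    0 < Cmat B0 w k m * Gmat B0 w k m := by
  obtain ⟨D, hD⟩ : ∃ D, IsSkewSymmetrizer D B0 := hB0
  have h := (row_support_of_mul_eq_one (Cmat_transpose_mul_diagonal_mul_Gmat_mul_diagonal_inv
    hsc hD w) (m := m) (k := k) (by simp_all)).1
  simp only [mul_diagonal, transpose_apply, toRat_apply, Pi.inv_apply] at h
  have h' : ((Cmat B0 w k m * Gmat B0 w k m : ℤ) : ℚ) * (D k * (D m)⁻¹) = 1 := by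
    push_cast; linear_combination h
  exact_mod_cast pos_of_mul_pos_left (h' ▸ one_pos) (mul_pos (hD.1 k) (inv_pos.mpr (hD.1 m))).le

lemma Cmat_col_eq_and_Gmat_row_eq_of_col_single {B0 : Matrix ι ι ℤ} (hsc : SignCoherence ι)
    (hB0 : IsSkewSymmetrizable B0) {w : List ι} {k m : ι} {ε : ℤ}
    (hC : ∀ i ≠ k, Cmat B0 w i m = 0) (hε : IsSignOf ε fun j => Gmat B0 w k j) :
    (∀ i, Cmat B0 w i m = if i = k then ε else 0) ∧
      ∀ j, Gmat B0 w k j = if j = m then ε else 0 := by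
  have hG := (Cmat_col_single_iff hsc hB0 w k m).mp hC
  have hGkm := hε.apply_eq_of_isUnit (isUnit_apply_of_row_single (isUnit_Gmat hsc hB0 w) hG)
  have hCkm : Cmat B0 w k m = ε := by
    have hpos := Cmat_mul_Gmat_pos_of_col_single hsc hB0 hC
    rcases Int.isUnit_iff.mp (isUnit_apply_of_col_single (isUnit_Cmat hsc hB0 w) hC) with h | h <;>
      rcases hε.1 with rfl | rfl <;> simp_all
  refine ⟨fun i => ?_, fun j => ?_⟩
  · split_ifs with hi
    · rwa [hi]
    · exact hC i hi
  · split_ifs with hj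
    · rwa [hj]
    · exact hG j hj

lemma Pmat_mul_mul_Pmat_of_col_single {B1 Bs C : Matrix ι ι ℤ} {k m : ι} {ε : ℤ}
    (hkk : B1 k k = 0) (hmm : Bs m m = 0) (hC : ∀ i, C i m = if i = k then ε else 0)
    (hrow : ∀ j, (B1 * C) k j = ε * Bs m j) :
    Pmat ε B1 k * C * Pmat ε Bs m = Pmat (-ε) B1 k * C * Pmat (-ε) Bs m := by
  set N : Matrix ι ι ℤ := Matrix.of fun i j => if i = k then Bs m j else 0
  have hEC : rowSel k B1 * C = ε • N := by
    ext i j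
    by_cases hi : i = k
    · subst hi; simp [rowSel_mul, N, hrow]
    · simp [rowSel_mul, N, hi]
  have hCF : C * rowSel m Bs = ε • N := by
    ext i j
    by_cases hi : i = k <;> simp [mul_rowSel_apply, N, hC, hi]
  have hPN : Pmat (-ε) B1 k * N = -N := by
    ext i j
    rw [mul_apply_of_col_single (k := k) (fun l hl => by simp [N, hl]), Pmat_apply_col_self hkk]
    by_cases hi : i = k <;> simp [N, hi]
  have hNP : N * Pmat (-ε) Bs m = N := by
    ext i j
    rw [mul_Pmat_apply]
    by_cases hi : i = k <;> by_cases hj : j = m <;> simp [N, hi, hj, hmm]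
  have hEN : rowSel k B1 * N = 0 := by
    ext i j
    by_cases hi : i = k <;> simp [mul_apply, N, hi, hkk]
  -- After `Pmat_eq_Pmat_neg_add` the cross terms are `ε • ε • (-N)` and `ε • ε • N`.
  rw [Pmat_eq_Pmat_neg_add ε B1 k, Pmat_eq_Pmat_neg_add ε Bs m]
  simp only [add_mul, mul_add, smul_mul_assoc, mul_smul_comm, Matrix.mul_assoc, hCF]
  simp only [← Matrix.mul_assoc, hEC, smul_mul_assoc, hPN, hNP]
  simp only [Matrix.mul_assoc, hEN, smul_zero, add_zero, smul_neg, add_assoc, add_neg_cancel]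

def ThirdDualityAlong (w : List ι) : Prop :=
  ∀ B0 : Matrix ι ι ℤ, IsSkewSymmetrizable B0 →
    Cmat B0 w = (Gmat (Bmat B0 w)ᵀ w.reverse)ᵀ

def BaseChangeAlong (w : List ι) : Prop :=
  ∀ B0 : Matrix ι ι ℤ, IsSkewSymmetrizable B0 → ∀ (k : ι) (ε : ℤ),
    IsSignOf ε (fun j => Gmat (mutate k B0) w k j) →
    Cmat B0 (k :: w) = Pmat (-ε) (mutate k B0) k * Cmat (mutate k B0) w

lemma ThirdDualityAlong.Gmat_eq {w : List ι} (h : ThirdDualityAlong w.reverse)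
    {B0 : Matrix ι ι ℤ} (hB0 : IsSkewSymmetrizable B0) :
    Gmat B0 w = (Cmat (Bmat B0 w)ᵀ w.reverse)ᵀ := by
  have h' := h (Bmat B0 w)ᵀ (hB0.Bmat_transpose w)
  rw [List.reverse_reverse, Bmat_transpose, Bmat_Bmat_reverse, transpose_transpose] at h'
  rw [h', transpose_transpose]

lemma thirdDualityAlong_nil : ThirdDualityAlong ([] : List ι) := fun _ _ => by
  simp [Cmat_nil, Gmat_nil]

lemma baseChangeAlong_nil : BaseChangeAlong ([] : List ι) := by
  intro B0 _ k ε hε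
  have h1 : IsSignOf 1 fun i => (1 : Matrix ι ι ℤ) i k := ⟨Or.inl rfl, fun i => by
    by_cases hi : i = k <;> simp [one_apply, hi]⟩
  have hε1 : ε = 1 := hε.eq_of_apply_eq (Or.inl rfl) (i := k) (by simp [Gmat_nil])
  rw [hε1, Pmat_neg_mutate, Cmat_nil, Matrix.mul_one]
  exact (Cmat_concat_of_isSignOf (w := []) h1).trans (Matrix.one_mul _)

lemma thirdDualityAlong_cons (hsc : SignCoherence ι) {w : List ι} (hTD : ThirdDualityAlong w)
    (hTDr : ThirdDualityAlong w.reverse) (hBC : BaseChangeAlong w) (k : ι) :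
    ThirdDualityAlong (k :: w) := by
  intro B0 hB0
  have hB1 := hB0.mutate k
  set B' := (Bmat (mutate k B0) w)ᵀ
  have hrev : Bmat B' w.reverse = (mutate k B0)ᵀ := by
    rw [Bmat_transpose, Bmat_Bmat_reverse]
  obtain ⟨ε, hε⟩ := exists_isSignOf (hsc B' (hB1.Bmat_transpose w) w.reverse k)
  have hεG : IsSignOf ε fun j => Gmat (mutate k B0) w k j := by
    rwa [hTDr.Gmat_eq hB1]
  have hGs := Gmat_concat_of_isSignOf hsc (hB1.Bmat_transpose w) hε
  rw [hrev] at hGs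
  rw [hBC B0 hB0 k ε hεG, List.reverse_cons, Bmat_cons, hGs, transpose_mul, Qmat_transpose,
    transpose_transpose, hTD _ hB1]

lemma baseChangeAlong_concat (hsc : SignCoherence ι) {v : List ι}
    (hTDr : ThirdDualityAlong v.reverse) (hBC : BaseChangeAlong v) (m : ι) :
    BaseChangeAlong (v ++ [m]) := by
  intro B0 hB0 k ε₁ hε₁
  have hB1 := hB0.mutate k
  set B1 := mutate k B0
  have hkk : B1 k k = 0 := hB1.Bmat_apply_self [] k
  have hmm : Bmat B1 v m m = 0 := hB1.Bmat_apply_self v m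
  have hGC : Gmat B1 v = (Cmat (Bmat B1 v)ᵀ v.reverse)ᵀ := hTDr.Gmat_eq hB1
  obtain ⟨ε₀, hε₀⟩ := exists_isSignOf (v := fun j => Gmat B1 v k j) (by
    rw [hGC]; exact hsc (Bmat B1 v)ᵀ (hB1.Bmat_transpose v) v.reverse k)
  obtain ⟨η₁, hη₁⟩ := exists_isSignOf (hsc B1 hB1 v m)
  obtain ⟨η₀, hη₀⟩ := exists_isSignOf (hsc B0 hB0 (k :: v) m)
  have hC0 : Cmat B0 (k :: v) = Pmat (-ε₀) B1 k * Cmat B1 v := hBC B0 hB0 k ε₀ hε₀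
  rw [hC0] at hη₀
  have hG1 : Gmat B1 (v ++ [m]) = Gmat B1 v * Qmat η₁ (Bmat B1 v) m :=
    Gmat_concat_of_isSignOf hsc hB1 hη₁
  rw [hG1] at hε₁
  rw [← List.cons_append, Cmat_concat_of_isSignOf (w := k :: v) (by rwa [hC0]), hC0,
    Cmat_concat_of_isSignOf hη₁, Bmat_cons, ← Matrix.mul_assoc]
  by_cases hcol : ∀ i ≠ k, Cmat B1 v i m = 0
  · obtain ⟨hC, hG⟩ := Cmat_col_eq_and_Gmat_row_eq_of_col_single hsc hB1 hcol hε₀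
    have hGrow : ∀ l ≠ m, Gmat B1 v k l = 0 := fun l hl => by simp [hG, hl]
    have hε₀' : -ε₀ = 1 ∨ -ε₀ = -1 := by rcases hε₀.1 with h | h <;> simp [h]
    have hη₁ε₀ : η₁ = ε₀ := hη₁.eq_of_apply_eq hε₀.1 (i := k) (by simp [hC])
    have hε₁' : ε₁ = -ε₀ := hε₁.eq_of_apply_eq hε₀' (i := m) (by
      simp [mul_apply_of_row_single hGrow, Qmat_apply_self hmm, hG])
    have hη₀' : η₀ = -ε₀ := hη₀.eq_of_apply_eq hε₀' (i := k) (by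
      simp [mul_apply_of_col_single hcol, Pmat_apply_col_self hkk, hC])
    rw [hη₀', hε₁', hη₁ε₀, neg_neg]
    refine (Pmat_mul_mul_Pmat_of_col_single hkk hmm hC fun j => ?_).symm
    rw [mul_Cmat_eq_Gmat_mul_Bmat hsc hB1, mul_apply_of_row_single hGrow, hG, if_pos rfl]
  -- Rows `≠ k` of `Pmat _ _ k` and columns `≠ m` of `Qmat _ _ m` are those of the identity.
  · obtain ⟨i, hik, hCi⟩ : ∃ i, i ≠ k ∧ Cmat B1 v i m ≠ 0 := by simpa using hcol
    obtain ⟨j, hjm, hGj⟩ : ∃ j, j ≠ m ∧ Gmat B1 v k j ≠ 0 := by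
      simpa using mt (Cmat_col_single_iff hsc hB1 v k m).mpr hcol
    have hη : η₀ = η₁ := hη₀.eq hη₁ (Pmat_mul_apply_of_ne _ _ _ hik m)
      (by rwa [Pmat_mul_apply_of_ne _ _ _ hik])
    have hε : ε₁ = ε₀ := hε₁.eq hε₀ (mul_Qmat_apply_of_ne _ _ _ hjm k)
      (by rwa [mul_Qmat_apply_of_ne _ _ _ hjm])
    rw [hη, hε]

lemma thirdDualityAlong_and_baseChangeAlong (hsc : SignCoherence ι) (w : List ι) :
    ThirdDualityAlong w ∧ BaseChangeAlong w := by
  induction hr : w.length generalizing w with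
  | zero =>
    obtain rfl := List.eq_nil_of_length_eq_zero hr
    exact ⟨thirdDualityAlong_nil, baseChangeAlong_nil⟩
  | succ r ih =>
    refine ⟨?_, ?_⟩
    · obtain ⟨k, w, rfl⟩ := List.exists_cons_of_length_eq_add_one hr
      have hw : w.length = r := by simpa using hr
      exact thirdDualityAlong_cons hsc (ih w hw).1 (ih w.reverse (by simpa using hw)).1
        (ih w hw).2 k
    · obtain rfl | ⟨v, m, rfl⟩ := w.eq_nil_or_concat'
      · simp at hr
      have hv : v.length = r := by simpa using hr
      exact baseChangeAlong_concat hsc (ih v.reverse (by simpa using hv)).1 (ih v hv).2 m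

theorem third_duality_general (n : ℕ)
    (hsc : ∀ B : Matrix (Fin n) (Fin n) ℤ, IsSkewSymmetrizable B →
      ∀ w : List (Fin n), ColSignCoherent (Cmat B w))
    (B0 : Matrix (Fin n) (Fin n) ℤ) (hB0 : IsSkewSymmetrizable B0)
    (w : List (Fin n)) :
    Cmat B0 w = (Gmat (Bmat B0 w)ᵀ w.reverse)ᵀ ∧
    Gmat B0 w = (Cmat (Bmat B0 w)ᵀ w.reverse)ᵀ ∧
    RowSignCoherent (Gmat B0 w) := by
  have hTD (w : List (Fin n)) := (thirdDualityAlong_and_baseChangeAlong hsc w).1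
  have hG := (hTD w.reverse).Gmat_eq hB0
  refine ⟨hTD w B0 hB0, hG, ?_⟩
  rw [hG]
  exact hsc _ (hB0.Bmat_transpose w) w.reverse

/-- **Third duality** and row sign-coherence of `G`-matrices. -/
theorem third_duality (n : ℕ) (hn : 1 ≤ n)
    (hsc : ∀ B : Matrix (Fin n) (Fin n) ℤ, IsSkewSymmetrizable B →
      ∀ w : List (Fin n), ColSignCoherent (Cmat B w))
    (B0 : Matrix (Fin n) (Fin n) ℤ) (hB0 : IsSkewSymmetrizable B0)
    (w : List (Fin n)) :
    Cmat B0 w = (Gmat (Bmat B0 w)ᵀ w.reverse)ᵀ ∧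
    Gmat B0 w = (Cmat (Bmat B0 w)ᵀ w.reverse)ᵀ ∧
    RowSignCoherent (Gmat B0 w) :=
  third_duality_general n hsc B0 hB0 w

end ClusterPattern
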